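/- For every n ≥ 1, the Thomas-Walls graph T_n contains exactly four triangles. -/
import Mathlib


open SimpleGraph

/-- Pairs of natural numbers encoding the edges of the Thomas-Walls graph `T_n`.
The recursive construction (T_1 = K_4; T_{m+1} obtained from T_m by deleting the edge
`a_m b_m`, which lies in two triangles, and adding vertices `x_m, y_m, z_m` with edges
`a_m x_m, b_m y_m, b_m z_m, x_m y_m, x_m z_m, y_m z_m`) is realized explicitly with
vertex `0 = c`, `1 = d`, `3k-1 = a_k`, `3k = b_k`, `3k+1 = x_k`, where `a_{k+1} = y_k`
and `b_{k+1} = z_k`; `T_1` is `K_4` on `{c, d, a_1, b_1}`. -/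
def twPairs (n : ℕ) : Set (ℕ × ℕ) :=
  {p | p = (0, 2) ∨ p = (0, 3) ∨ p = (1, 2) ∨ p = (1, 3) ∨ p = (0, 1) ∨
       p = (3 * n - 1, 3 * n) ∨
       ∃ k, 1 ≤ k ∧ k < n ∧
         (p = (3 * k - 1, 3 * k + 1) ∨ p = (3 * k, 3 * k + 2) ∨ p = (3 * k, 3 * k + 3) ∨
          p = (3 * k + 1, 3 * k + 2) ∨ p = (3 * k + 1, 3 * k + 3))}

/-- The Thomas-Walls graph `T_n` (for `n ≥ 1`), on the `3n + 1` vertices `0, …, 3n`. -/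
def thomasWalls (n : ℕ) : SimpleGraph (Fin (3 * n + 1)) :=
  SimpleGraph.fromRel fun i j => ((i : ℕ), (j : ℕ)) ∈ twPairs n

/-- The reduced Thomas-Walls graph `T'_n = T_n − {u₁u₃, v₁v₃}` (for `n ≥ 2`). -/
def reducedThomasWalls (n : ℕ) : SimpleGraph (Fin (3 * n + 1)) :=
  SimpleGraph.fromRel fun i j =>
    ((i : ℕ), (j : ℕ)) ∈ twPairs n \ ({(0, 1), (3 * n - 1, 3 * n)} : Set (ℕ × ℕ))

/-- The vertex of `T_n` with index `k` (for `k ≤ 3n`). -/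
def twV (n k : ℕ) : Fin (3 * n + 1) := ⟨k % (3 * n + 1), Nat.mod_lt _ (by omega)⟩

/-- `u₁ = c`: a vertex of the 4-cycle `C₁ = u₁u₂u₃u₄` of `T_n` with `u₁u₃ ∈ E(T_n)`. -/
def tw_u1 (n : ℕ) : Fin (3 * n + 1) := twV n 0
/-- `u₂ = a₁`. -/
def tw_u2 (n : ℕ) : Fin (3 * n + 1) := twV n 2
/-- `u₃ = d`. -/
def tw_u3 (n : ℕ) : Fin (3 * n + 1) := twV n 1
/-- `u₄ = b₁`. -/
def tw_u4 (n : ℕ) : Fin (3 * n + 1) := twV n 3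
/-- `v₁ = y_{n-1}`: a vertex of the 4-cycle `C₂ = v₁v₂v₃v₄` of `T_n` with `v₁v₃ ∈ E(T_n)`. -/
def tw_v1 (n : ℕ) : Fin (3 * n + 1) := twV n (3 * n - 1)
/-- `v₂ = x_{n-1}`. -/
def tw_v2 (n : ℕ) : Fin (3 * n + 1) := twV n (3 * n - 2)
/-- `v₃ = z_{n-1}`. -/
def tw_v3 (n : ℕ) : Fin (3 * n + 1) := twV n (3 * n)
/-- `v₄ = b_{n-1}`. -/
def tw_v4 (n : ℕ) : Fin (3 * n + 1) := twV n (3 * n - 3)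

def twF (n a b : ℕ) : Prop :=
  (a = 0 ∧ b = 2) ∨ (a = 0 ∧ b = 3) ∨ (a = 1 ∧ b = 2) ∨ (a = 1 ∧ b = 3) ∨ (a = 0 ∧ b = 1) ∨
  (a = 3 * n - 1 ∧ b = 3 * n) ∨
  (2 ≤ a ∧ a + 4 ≤ 3 * n ∧ a % 3 = 2 ∧ b = a + 2) ∨
  (3 ≤ a ∧ a + 3 ≤ 3 * n ∧ a % 3 = 0 ∧ b = a + 2) ∨
  (3 ≤ a ∧ a + 3 ≤ 3 * n ∧ a % 3 = 0 ∧ b = a + 3) ∨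
  (4 ≤ a ∧ a + 2 ≤ 3 * n ∧ a % 3 = 1 ∧ b = a + 1) ∨
  (4 ≤ a ∧ a + 2 ≤ 3 * n ∧ a % 3 = 1 ∧ b = a + 2)

lemma twF_bounds (n a b : ℕ) (hn : 1 ≤ n) (h : twF n a b) :
    a < b ∧ b ≤ a + 3 ∧ b ≤ 3 * n := by
  unfold twF at h; omega

lemma tw_key (n a b c : ℕ) (hn : 1 ≤ n) (h1 : twF n a b) (h2 : twF n a c) (h3 : twF n b c) :
    (a = 0 ∧ b = 1 ∧ c = 2) ∨ (a = 0 ∧ b = 1 ∧ c = 3) ∨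
    (a = 3 * n - 3 ∧ b = 3 * n - 1 ∧ c = 3 * n) ∨
    (a = 3 * n - 2 ∧ b = 3 * n - 1 ∧ c = 3 * n) := by
  obtain ⟨l1, u1, t1⟩ := twF_bounds n a b hn h1
  obtain ⟨l2, u2, t2⟩ := twF_bounds n a c hn h2
  obtain ⟨l3, u3, t3⟩ := twF_bounds n b c hn h3
  have hb : b = a + 1 ∨ b = a + 2 := by omega
  rcases hb with hb | hb
  · have hc : c = a + 2 ∨ c = a + 3 := by omega
    unfold twF at h1 h2 h3
    rcases hc with hc | hc
    · have key : (a = 0 ∧ b = 1 ∧ c = 2) ∨ (a = 3*n-2 ∧ b = 3*n-1 ∧ c = 3*n) := by omega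
      rcases key with key | key
      · exact Or.inl key
      · exact Or.inr (Or.inr (Or.inr key))
    · have key : a = 0 ∧ b = 1 ∧ c = 3 := by omega
      exact Or.inr (Or.inl key)
  · have hc : c = a + 3 := by omega
    unfold twF at h1 h2 h3
    have key : a = 3*n-3 ∧ b = 3*n-1 ∧ c = 3*n := by omega
    exact Or.inr (Or.inr (Or.inl key))

lemma mem_twPairs_iff (n a b : ℕ) : ((a, b) ∈ twPairs n) ↔ twF n a b := by
  simp only [twPairs, twF, Set.mem_setOf_eq, Prod.mk.injEq]
  constructor
  · rintro (h|h|h|h|h|h|⟨k,hk1,hk2,h|h|h|h|h⟩)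
    · exact Or.inl h
    · exact Or.inr (Or.inl h)
    · exact Or.inr (Or.inr (Or.inl h))
    · exact Or.inr (Or.inr (Or.inr (Or.inl h)))
    · exact Or.inr (Or.inr (Or.inr (Or.inr (Or.inl h))))
    · exact Or.inr (Or.inr (Or.inr (Or.inr (Or.inr (Or.inl h)))))
    · exact Or.inr (Or.inr (Or.inr (Or.inr (Or.inr (Or.inr (Or.inl
        ⟨by omega, by omega, by omega, by omega⟩))))))
    · exact Or.inr (Or.inr (Or.inr (Or.inr (Or.inr (Or.inr (Or.inr (Or.inl
        ⟨by omega, by omega, by omega, by omega⟩)))))))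
    · exact Or.inr (Or.inr (Or.inr (Or.inr (Or.inr (Or.inr (Or.inr (Or.inr (Or.inl
        ⟨by omega, by omega, by omega, by omega⟩))))))))
    · exact Or.inr (Or.inr (Or.inr (Or.inr (Or.inr (Or.inr (Or.inr (Or.inr (Or.inr (Or.inl
        ⟨by omega, by omega, by omega, by omega⟩)))))))))
    · exact Or.inr (Or.inr (Or.inr (Or.inr (Or.inr (Or.inr (Or.inr (Or.inr (Or.inr (Or.inr
        ⟨by omega, by omega, by omega, by omega⟩)))))))))
  · rintro (h|h|h|h|h|h|h|h|h|h|h)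
    · exact Or.inl h
    · exact Or.inr (Or.inl h)
    · exact Or.inr (Or.inr (Or.inl h))
    · exact Or.inr (Or.inr (Or.inr (Or.inl h)))
    · exact Or.inr (Or.inr (Or.inr (Or.inr (Or.inl h))))
    · exact Or.inr (Or.inr (Or.inr (Or.inr (Or.inr (Or.inl h)))))
    · exact Or.inr (Or.inr (Or.inr (Or.inr (Or.inr (Or.inr
        ⟨(a+1)/3, by omega, by omega, Or.inl ⟨by omega, by omega⟩⟩)))))
    · exact Or.inr (Or.inr (Or.inr (Or.inr (Or.inr (Or.inr
        ⟨a/3, by omega, by omega, Or.inr (Or.inl ⟨by omega, by omega⟩)⟩)))))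
    · exact Or.inr (Or.inr (Or.inr (Or.inr (Or.inr (Or.inr
        ⟨a/3, by omega, by omega, Or.inr (Or.inr (Or.inl ⟨by omega, by omega⟩))⟩)))))
    · exact Or.inr (Or.inr (Or.inr (Or.inr (Or.inr (Or.inr
        ⟨a/3, by omega, by omega, Or.inr (Or.inr (Or.inr (Or.inl ⟨by omega, by omega⟩)))⟩)))))
    · exact Or.inr (Or.inr (Or.inr (Or.inr (Or.inr (Or.inr
        ⟨a/3, by omega, by omega, Or.inr (Or.inr (Or.inr (Or.inr ⟨by omega, by omega⟩)))⟩)))))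

lemma tw_adj_iff (n : ℕ) (x y : Fin (3 * n + 1)) :
    (thomasWalls n).Adj x y ↔ x ≠ y ∧ (twF n x.val y.val ∨ twF n y.val x.val) := by
  rw [thomasWalls, fromRel_adj, mem_twPairs_iff, mem_twPairs_iff]

lemma twV_val (n k : ℕ) (h : k ≤ 3 * n) : (twV n k).val = k := Nat.mod_eq_of_lt (by omega)

lemma tw_adj_of (n k l : ℕ) (hn : 1 ≤ n) (hk : k ≤ 3 * n) (hl : l ≤ 3 * n) (h : twF n k l) :
    (thomasWalls n).Adj (twV n k) (twV n l) := by
  rw [tw_adj_iff, twV_val n k hk, twV_val n l hl]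
  have hkl : k ≠ l := (twF_bounds n k l hn h).1.ne
  exact ⟨fun he => hkl (by rw [← twV_val n k hk, ← twV_val n l hl, he]), Or.inl h⟩

lemma tri_eq_of (n : ℕ) (x y z : Fin (3 * n + 1)) (k1 k2 k3 : ℕ)
    (h1 : k1 ≤ 3 * n) (h2 : k2 ≤ 3 * n) (h3 : k3 ≤ 3 * n)
    (d12 : k1 ≠ k2) (d13 : k1 ≠ k3) (d23 : k2 ≠ k3)
    (hxy : x ≠ y) (hxz : x ≠ z) (hyz : y ≠ z)
    (m1 : (x : ℕ) = k1 ∨ (y : ℕ) = k1 ∨ (z : ℕ) = k1)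
    (m2 : (x : ℕ) = k2 ∨ (y : ℕ) = k2 ∨ (z : ℕ) = k2)
    (m3 : (x : ℕ) = k3 ∨ (y : ℕ) = k3 ∨ (z : ℕ) = k3) :
    ({x, y, z} : Finset (Fin (3 * n + 1))) = {twV n k1, twV n k2, twV n k3} := by
  have hm : ∀ k, k ≤ 3 * n → ((x : ℕ) = k ∨ (y : ℕ) = k ∨ (z : ℕ) = k) →
      twV n k ∈ ({x, y, z} : Finset (Fin (3 * n + 1))) := by
    intro k hk hv
    simp only [Finset.mem_insert, Finset.mem_singleton]
    rcases hv with h|h|h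
    · exact Or.inl (Fin.ext ((twV_val n k hk).trans h.symm))
    · exact Or.inr (Or.inl (Fin.ext ((twV_val n k hk).trans h.symm)))
    · exact Or.inr (Or.inr (Fin.ext ((twV_val n k hk).trans h.symm)))
  have hne : ∀ k l, k ≤ 3 * n → l ≤ 3 * n → k ≠ l → twV n k ≠ twV n l := by
    intro k l hk hl hkl he
    exact hkl (by rw [← twV_val n k hk, ← twV_val n l hl, he])
  have hsub : ({twV n k1, twV n k2, twV n k3} : Finset (Fin (3 * n + 1))) ⊆ {x, y, z} :=
    Finset.insert_subset (hm k1 h1 m1) (Finset.insert_subset (hm k2 h2 m2)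
      (Finset.singleton_subset_iff.mpr (hm k3 h3 m3)))
  have card1 : ({x, y, z} : Finset (Fin (3 * n + 1))).card = 3 :=
    Finset.card_eq_three.mpr ⟨x, y, z, hxy, hxz, hyz, rfl⟩
  have card2 : ({twV n k1, twV n k2, twV n k3} : Finset (Fin (3 * n + 1))).card = 3 :=
    Finset.card_eq_three.mpr ⟨_, _, _, hne k1 k2 h1 h2 d12, hne k1 k3 h1 h3 d13,
      hne k2 k3 h2 h3 d23, rfl⟩
  exact (Finset.eq_of_subset_of_card_le hsub (by rw [card1, card2])).symm

lemma tw_main (n : ℕ) (hn : 1 ≤ n) (x y z : Fin (3 * n + 1))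
    (hxy : (x : ℕ) < (y : ℕ)) (hyz : (y : ℕ) < (z : ℕ))
    (h1 : twF n x.val y.val) (h2 : twF n x.val z.val) (h3 : twF n y.val z.val) :
    ({x, y, z} : Finset (Fin (3 * n + 1))) = {twV n 0, twV n 1, twV n 2} ∨
    ({x, y, z} : Finset (Fin (3 * n + 1))) = {twV n 0, twV n 1, twV n 3} ∨
    ({x, y, z} : Finset (Fin (3 * n + 1))) = {twV n (3*n-3), twV n (3*n-1), twV n (3*n)} ∨
    ({x, y, z} : Finset (Fin (3 * n + 1))) = {twV n (3*n-2), twV n (3*n-1), twV n (3*n)} := by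
  have nxy : x ≠ y := fun h => by rw [h] at hxy; omega
  have nxz : x ≠ z := fun h => by rw [h] at hxy; omega
  have nyz : y ≠ z := fun h => by rw [h] at hyz; omega
  rcases tw_key n x.val y.val z.val hn h1 h2 h3 with
    ⟨e1, e2, e3⟩ | ⟨e1, e2, e3⟩ | ⟨e1, e2, e3⟩ | ⟨e1, e2, e3⟩
  · exact Or.inl (tri_eq_of n x y z 0 1 2 (by omega) (by omega) (by omega)
      (by omega) (by omega) (by omega) nxy nxz nyz (by omega) (by omega) (by omega))
  · exact Or.inr (Or.inl (tri_eq_of n x y z 0 1 3 (by omega) (by omega) (by omega)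
      (by omega) (by omega) (by omega) nxy nxz nyz (by omega) (by omega) (by omega)))
  · exact Or.inr (Or.inr (Or.inl (tri_eq_of n x y z (3*n-3) (3*n-1) (3*n)
      (by omega) (by omega) (by omega) (by omega) (by omega) (by omega)
      nxy nxz nyz (by omega) (by omega) (by omega))))
  · exact Or.inr (Or.inr (Or.inr (tri_eq_of n x y z (3*n-2) (3*n-1) (3*n)
      (by omega) (by omega) (by omega) (by omega) (by omega) (by omega)
      nxy nxz nyz (by omega) (by omega) (by omega))))

lemma tw_forward (n : ℕ) (hn : 1 ≤ n) (t : Finset (Fin (3 * n + 1)))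
    (h : (thomasWalls n).IsNClique 3 t) :
    t = {twV n 0, twV n 1, twV n 2} ∨
    t = {twV n 0, twV n 1, twV n 3} ∨
    t = {twV n (3*n-3), twV n (3*n-1), twV n (3*n)} ∨
    t = {twV n (3*n-2), twV n (3*n-1), twV n (3*n)} := by
  have orient : ∀ u v : Fin (3 * n + 1), (u : ℕ) < (v : ℕ) →
      (twF n u.val v.val ∨ twF n v.val u.val) → twF n u.val v.val := by
    intro u v hlt h
    rcases h with h | h
    · exact h
    · exact absurd (twF_bounds n _ _ hn h).1 (by omega)
  rw [is3Clique_iff] at h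
  obtain ⟨x, y, z, hxy, hxz, hyz, rfl⟩ := h
  rw [tw_adj_iff] at hxy hxz hyz
  obtain ⟨hxy0, hxy1⟩ := hxy
  obtain ⟨hxz0, hxz1⟩ := hxz
  obtain ⟨hyz0, hyz1⟩ := hyz
  have hxyv : (x : ℕ) ≠ (y : ℕ) := fun h => hxy0 (Fin.ext h)
  have hxzv : (x : ℕ) ≠ (z : ℕ) := fun h => hxz0 (Fin.ext h)
  have hyzv : (y : ℕ) ≠ (z : ℕ) := fun h => hyz0 (Fin.ext h)
  rcases Nat.lt_or_ge (x : ℕ) (y : ℕ) with h1 | h1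
  · rcases Nat.lt_or_ge (y : ℕ) (z : ℕ) with h2 | h2
    · exact tw_main n hn x y z h1 h2 (orient x y h1 hxy1) (orient x z (by omega) hxz1)
        (orient y z h2 hyz1)
    · rcases Nat.lt_or_ge (x : ℕ) (z : ℕ) with h3 | h3
      · rw [show ({x, y, z} : Finset (Fin (3 * n + 1))) = {x, z, y} from
          congrArg (insert x) (Finset.pair_comm y z)]
        exact tw_main n hn x z y h3 (by omega) (orient x z h3 hxz1)
          (orient x y (by omega) hxy1) (orient z y (by omega) hyz1.symm)
      · rw [show ({x, y, z} : Finset (Fin (3 * n + 1))) = {z, x, y} from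
          (congrArg (insert x) (Finset.pair_comm y z)).trans (Finset.insert_comm x z {y})]
        exact tw_main n hn z x y (by omega) h1 (orient z x (by omega) hxz1.symm)
          (orient z y (by omega) hyz1.symm) (orient x y h1 hxy1)
  · rcases Nat.lt_or_ge (x : ℕ) (z : ℕ) with h2 | h2
    · rw [show ({x, y, z} : Finset (Fin (3 * n + 1))) = {y, x, z} from
        Finset.insert_comm x y {z}]
      exact tw_main n hn y x z (by omega) h2 (orient y x (by omega) hxy1.symm)
        (orient y z (by omega) hyz1) (orient x z h2 hxz1)
    · rcases Nat.lt_or_ge (y : ℕ) (z : ℕ) with h3 | h3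
      · rw [show ({x, y, z} : Finset (Fin (3 * n + 1))) = {y, z, x} from
          (Finset.insert_comm x y {z}).trans (congrArg (insert y) (Finset.pair_comm x z))]
        exact tw_main n hn y z x h3 (by omega) (orient y z h3 hyz1)
          (orient y x (by omega) hxy1.symm) (orient z x (by omega) hxz1.symm)
      · rw [show ({x, y, z} : Finset (Fin (3 * n + 1))) = {z, y, x} from
          ((congrArg (insert x) (Finset.pair_comm y z)).trans
            (Finset.insert_comm x z {y})).trans (congrArg (insert z) (Finset.pair_comm x y))]
        exact tw_main n hn z y x (by omega) (by omega) (orient z y (by omega) hyz1.symm)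
          (orient z x (by omega) hxz1.symm) (orient y x (by omega) hxy1.symm)

lemma tw_backward (n : ℕ) (hn : 1 ≤ n) (t : Finset (Fin (3 * n + 1)))
    (h : t = {twV n 0, twV n 1, twV n 2} ∨
         t = {twV n 0, twV n 1, twV n 3} ∨
         t = {twV n (3*n-3), twV n (3*n-1), twV n (3*n)} ∨
         t = {twV n (3*n-2), twV n (3*n-1), twV n (3*n)}) :
    (thomasWalls n).IsNClique 3 t := by
  have hadj : ∀ k l : ℕ, k ≤ 3 * n → l ≤ 3 * n → twF n k l →
      (thomasWalls n).Adj (twV n k) (twV n l) := fun k l hk hl hf => tw_adj_of n k l hn hk hl hf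
  have dj1 : twF n 0 1 := Or.inr (Or.inr (Or.inr (Or.inr (Or.inl ⟨rfl, rfl⟩))))
  have dj2 : twF n 0 2 := Or.inl ⟨rfl, rfl⟩
  have dj3 : twF n 0 3 := Or.inr (Or.inl ⟨rfl, rfl⟩)
  have dj4 : twF n 1 2 := Or.inr (Or.inr (Or.inl ⟨rfl, rfl⟩))
  have dj5 : twF n 1 3 := Or.inr (Or.inr (Or.inr (Or.inl ⟨rfl, rfl⟩)))
  have dj6 : twF n (3*n-1) (3*n) :=
    Or.inr (Or.inr (Or.inr (Or.inr (Or.inr (Or.inl ⟨rfl, rfl⟩)))))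
  have djC1 : twF n (3*n-3) (3*n-1) := by
    rcases Nat.lt_or_ge n 2 with hc | hc
    · have hone : n = 1 := by omega
      subst hone
      exact Or.inl ⟨by omega, by omega⟩
    · exact Or.inr (Or.inr (Or.inr (Or.inr (Or.inr (Or.inr (Or.inr (Or.inl
        ⟨by omega, by omega, by omega, by omega⟩)))))))
  have djC2 : twF n (3*n-3) (3*n) := by
    rcases Nat.lt_or_ge n 2 with hc | hc
    · have hone : n = 1 := by omega
      subst hone
      exact Or.inr (Or.inl ⟨by omega, by omega⟩)
    · exact Or.inr (Or.inr (Or.inr (Or.inr (Or.inr (Or.inr (Or.inr (Or.inr (Or.inl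
        ⟨by omega, by omega, by omega, by omega⟩))))))))
  have djD1 : twF n (3*n-2) (3*n-1) := by
    rcases Nat.lt_or_ge n 2 with hc | hc
    · have hone : n = 1 := by omega
      subst hone
      exact Or.inr (Or.inr (Or.inl ⟨by omega, by omega⟩))
    · exact Or.inr (Or.inr (Or.inr (Or.inr (Or.inr (Or.inr (Or.inr (Or.inr (Or.inr (Or.inl
        ⟨by omega, by omega, by omega, by omega⟩)))))))))
  have djD2 : twF n (3*n-2) (3*n) := by
    rcases Nat.lt_or_ge n 2 with hc | hc
    · have hone : n = 1 := by omega
      subst hone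
      exact Or.inr (Or.inr (Or.inr (Or.inl ⟨by omega, by omega⟩)))
    · exact Or.inr (Or.inr (Or.inr (Or.inr (Or.inr (Or.inr (Or.inr (Or.inr (Or.inr (Or.inr
        ⟨by omega, by omega, by omega, by omega⟩)))))))))
  rcases h with rfl | rfl | rfl | rfl
  · exact is3Clique_triple_iff.mpr ⟨hadj 0 1 (by omega) (by omega) dj1,
      hadj 0 2 (by omega) (by omega) dj2, hadj 1 2 (by omega) (by omega) dj4⟩
  · exact is3Clique_triple_iff.mpr ⟨hadj 0 1 (by omega) (by omega) dj1,
      hadj 0 3 (by omega) (by omega) dj3, hadj 1 3 (by omega) (by omega) dj5⟩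
  · exact is3Clique_triple_iff.mpr ⟨hadj (3*n-3) (3*n-1) (by omega) (by omega) djC1,
      hadj (3*n-3) (3*n) (by omega) (by omega) djC2,
      hadj (3*n-1) (3*n) (by omega) (by omega) dj6⟩
  · exact is3Clique_triple_iff.mpr ⟨hadj (3*n-2) (3*n-1) (by omega) (by omega) djD1,
      hadj (3*n-2) (3*n) (by omega) (by omega) djD2,
      hadj (3*n-1) (3*n) (by omega) (by omega) dj6⟩

lemma tw_hmem (n : ℕ) (k l1 l2 l3 : ℕ) (hk : k ≤ 3*n) (h1 : l1 ≤ 3*n) (h2 : l2 ≤ 3*n)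
    (h3 : l3 ≤ 3*n)
    (hm : twV n k ∈ ({twV n l1, twV n l2, twV n l3} : Finset (Fin (3*n+1)))) :
    k = l1 ∨ k = l2 ∨ k = l3 := by
  simp only [Finset.mem_insert, Finset.mem_singleton, Fin.ext_iff,
    twV_val n k hk, twV_val n l1 h1, twV_val n l2 h2, twV_val n l3 h3] at hm
  exact hm

/-- For every `n ≥ 1`, the Thomas-Walls graph `T_n` contains exactly four triangles. -/
theorem thomasWalls_four_triangles (n : ℕ) (hn : 1 ≤ n) :
    {t : Finset (Fin (3 * n + 1)) | (thomasWalls n).IsNClique 3 t}.ncard = 4 := by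
  have hset : {t : Finset (Fin (3 * n + 1)) | (thomasWalls n).IsNClique 3 t} =
      {({twV n 0, twV n 1, twV n 2} : Finset (Fin (3 * n + 1))),
       {twV n 0, twV n 1, twV n 3},
       {twV n (3*n-3), twV n (3*n-1), twV n (3*n)},
       {twV n (3*n-2), twV n (3*n-1), twV n (3*n)}} := by
    ext t
    simp only [Set.mem_setOf_eq, Set.mem_insert_iff, Set.mem_singleton_iff]
    exact ⟨tw_forward n hn t, tw_backward n hn t⟩
  rw [hset]
  have dAB : ({twV n 0, twV n 1, twV n 2} : Finset (Fin (3*n+1))) ≠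
      {twV n 0, twV n 1, twV n 3} := by
    intro h
    have := tw_hmem n 2 0 1 3 (by omega) (by omega) (by omega) (by omega)
      (h ▸ (by simp : twV n 2 ∈ ({twV n 0, twV n 1, twV n 2} : Finset (Fin (3*n+1)))))
    omega
  have dAC : ({twV n 0, twV n 1, twV n 2} : Finset (Fin (3*n+1))) ≠
      {twV n (3*n-3), twV n (3*n-1), twV n (3*n)} := by
    intro h
    have := tw_hmem n (3*n) 0 1 2 (by omega) (by omega) (by omega) (by omega)
      (h.symm ▸ (by simp : twV n (3*n) ∈
        ({twV n (3*n-3), twV n (3*n-1), twV n (3*n)} : Finset (Fin (3*n+1)))))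
    omega
  have dAD : ({twV n 0, twV n 1, twV n 2} : Finset (Fin (3*n+1))) ≠
      {twV n (3*n-2), twV n (3*n-1), twV n (3*n)} := by
    intro h
    have := tw_hmem n (3*n) 0 1 2 (by omega) (by omega) (by omega) (by omega)
      (h.symm ▸ (by simp : twV n (3*n) ∈
        ({twV n (3*n-2), twV n (3*n-1), twV n (3*n)} : Finset (Fin (3*n+1)))))
    omega
  have dBC : ({twV n 0, twV n 1, twV n 3} : Finset (Fin (3*n+1))) ≠
      {twV n (3*n-3), twV n (3*n-1), twV n (3*n)} := by
    intro h
    have := tw_hmem n 1 (3*n-3) (3*n-1) (3*n) (by omega) (by omega) (by omega) (by omega)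
      (h ▸ (by simp : twV n 1 ∈ ({twV n 0, twV n 1, twV n 3} : Finset (Fin (3*n+1)))))
    omega
  have dBD : ({twV n 0, twV n 1, twV n 3} : Finset (Fin (3*n+1))) ≠
      {twV n (3*n-2), twV n (3*n-1), twV n (3*n)} := by
    intro h
    have := tw_hmem n 0 (3*n-2) (3*n-1) (3*n) (by omega) (by omega) (by omega) (by omega)
      (h ▸ (by simp : twV n 0 ∈ ({twV n 0, twV n 1, twV n 3} : Finset (Fin (3*n+1)))))
    omega
  have dCD : ({twV n (3*n-3), twV n (3*n-1), twV n (3*n)} : Finset (Fin (3*n+1))) ≠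
      {twV n (3*n-2), twV n (3*n-1), twV n (3*n)} := by
    intro h
    have := tw_hmem n (3*n-3) (3*n-2) (3*n-1) (3*n) (by omega) (by omega) (by omega) (by omega)
      (h ▸ (by simp : twV n (3*n-3) ∈
        ({twV n (3*n-3), twV n (3*n-1), twV n (3*n)} : Finset (Fin (3*n+1)))))
    omega
  rw [Set.ncard_insert_of_notMem
      (by simp only [Set.mem_insert_iff, Set.mem_singleton_iff]; push_neg; exact ⟨dAB, dAC, dAD⟩),
    Set.ncard_insert_of_notMem
      (by simp only [Set.mem_insert_iff, Set.mem_singleton_iff]; push_neg; exact ⟨dBC, dBD⟩),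
    Set.ncard_insert_of_notMem (by simpa using dCD),
    Set.ncard_singleton]
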